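/- Regard q1 and r1 as functions of the home tax t (all other parameters fixed). At any t ∈ (0,1) where the maintained assumptions hold, these functions are differentiable with dq1/dt = −(1/Δ)·(1/(2(1−b1)))·[q1/((1−σ1)θ1) + c1/(1−t)²]·T2 < 0 and dr1/dt = −(1/((1−σ1)θ1))·{ q1 + (1/Δ)·((1−t)/(2(1−b1)))·[q1/((1−σ1)θ1) + c1/(1−t)²]·T2 } < 0: the home tax strictly reduces foreign output and foreign product R&D. -/
import Mathlib


/-- Effective slope term of the foreign firm's best response under product R&D. -/
noncomputable def Tone (b1 t σ1 θ1 : ℝ) : ℝ :=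
  1 - (1 - t) / (2 * (1 - b1) * (1 - σ1) * θ1)

/-- Effective slope term of the home firm's best response under product R&D. -/
noncomputable def Ttwo (b2 σ2 θ2 : ℝ) : ℝ :=
  1 - 1 / (2 * (1 - b2) * (1 - σ2) * θ2)

/-- Network-interaction term `M = m² / (4(1−b1)(1−b2))`. -/
noncomputable def Mnet (m b1 b2 : ℝ) : ℝ := m ^ 2 / (4 * (1 - b1) * (1 - b2))

/-- Determinant `Δ = T1·T2 − M` of the product-R&D equilibrium system. -/
noncomputable def Dr (m b1 b2 t σ1 σ2 θ1 θ2 : ℝ) : ℝ :=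
  Tone b1 t σ1 θ1 * Ttwo b2 σ2 θ2 - Mnet m b1 b2

/-- Equilibrium foreign output `q1` under product R&D. -/
noncomputable def q1p (a c1 c2 m b1 b2 t σ1 σ2 θ1 θ2 : ℝ) : ℝ :=
  ((a - c1 / (1 - t)) * Ttwo b2 σ2 θ2 / (2 * (1 - b1))
      - m * (a - c2) / (2 * (1 - b2))) / Dr m b1 b2 t σ1 σ2 θ1 θ2

/-- Equilibrium home output `q2` under product R&D. -/
noncomputable def q2p (a c1 c2 m b1 b2 t σ1 σ2 θ1 θ2 : ℝ) : ℝ :=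
  ((a - c2) * Tone b1 t σ1 θ1 / (2 * (1 - b2))
      - m * (a - c1 / (1 - t)) / (2 * (1 - b1))) / Dr m b1 b2 t σ1 σ2 θ1 θ2

/-- Equilibrium foreign product R&D `r1 = (1−t)q1 / ((1−σ1)θ1)`. -/
noncomputable def r1p (a c1 c2 m b1 b2 t σ1 σ2 θ1 θ2 : ℝ) : ℝ :=
  (1 - t) * q1p a c1 c2 m b1 b2 t σ1 σ2 θ1 θ2 / ((1 - σ1) * θ1)

/-- Equilibrium home product R&D `r2 = q2 / ((1−σ2)θ2)`. -/
noncomputable def r2p (a c1 c2 m b1 b2 t σ1 σ2 θ1 θ2 : ℝ) : ℝ :=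
  q2p a c1 c2 m b1 b2 t σ1 σ2 θ1 θ2 / ((1 - σ2) * θ2)

/-- The home tax strictly reduces foreign output and foreign product
R&D: `dq1/dt = −(1/Δ)·(1/(2(1−b1)))·[q1/((1−σ1)θ1) + c1/(1−t)²]·T2 < 0` and
`dr1/dt = −(1/((1−σ1)θ1))·{q1 + (1/Δ)·((1−t)/(2(1−b1)))·[q1/((1−σ1)θ1) + c1/(1−t)²]·T2} < 0`. -/
theorem tax_reduces_foreign_output_and_productRD
    (a c1 c2 m b1 b2 t σ1 σ2 θ1 θ2 : ℝ)
    (ha : 0 < a) (hc1 : 0 < c1) (hc2 : 0 < c2)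
    (hb1 : b1 ∈ Set.Ioo (0 : ℝ) 1) (hb2 : b2 ∈ Set.Ioo (0 : ℝ) 1)
    (ht : t ∈ Set.Ioo (0 : ℝ) 1)
    (hσ1 : σ1 ∈ Set.Ioo (0 : ℝ) 1) (hσ2 : σ2 ∈ Set.Ioo (0 : ℝ) 1)
    (hθ1 : 0 < θ1) (hθ2 : 0 < θ2)
    (hT1 : Tone b1 t σ1 θ1 > 0) (hT2 : Ttwo b2 σ2 θ2 > 0)
    (hΔ : Dr m b1 b2 t σ1 σ2 θ1 θ2 > 0)
    (hq1 : q1p a c1 c2 m b1 b2 t σ1 σ2 θ1 θ2 > 0)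
    (hq2 : q2p a c1 c2 m b1 b2 t σ1 σ2 θ1 θ2 > 0)
    :
    HasDerivAt (fun τ => q1p a c1 c2 m b1 b2 τ σ1 σ2 θ1 θ2)
      (-(1 / Dr m b1 b2 t σ1 σ2 θ1 θ2) * (1 / (2 * (1 - b1))) *
        (q1p a c1 c2 m b1 b2 t σ1 σ2 θ1 θ2 / ((1 - σ1) * θ1)
          + c1 / (1 - t) ^ 2) * Ttwo b2 σ2 θ2) t ∧
    -(1 / Dr m b1 b2 t σ1 σ2 θ1 θ2) * (1 / (2 * (1 - b1))) *
        (q1p a c1 c2 m b1 b2 t σ1 σ2 θ1 θ2 / ((1 - σ1) * θ1)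
          + c1 / (1 - t) ^ 2) * Ttwo b2 σ2 θ2 < 0 ∧
    HasDerivAt (fun τ => r1p a c1 c2 m b1 b2 τ σ1 σ2 θ1 θ2)
      (-(1 / ((1 - σ1) * θ1)) *
        (q1p a c1 c2 m b1 b2 t σ1 σ2 θ1 θ2
          + (1 / Dr m b1 b2 t σ1 σ2 θ1 θ2) * ((1 - t) / (2 * (1 - b1))) *
            (q1p a c1 c2 m b1 b2 t σ1 σ2 θ1 θ2 / ((1 - σ1) * θ1)
              + c1 / (1 - t) ^ 2) * Ttwo b2 σ2 θ2)) t ∧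
    -(1 / ((1 - σ1) * θ1)) *
        (q1p a c1 c2 m b1 b2 t σ1 σ2 θ1 θ2
          + (1 / Dr m b1 b2 t σ1 σ2 θ1 θ2) * ((1 - t) / (2 * (1 - b1))) *
            (q1p a c1 c2 m b1 b2 t σ1 σ2 θ1 θ2 / ((1 - σ1) * θ1)
              + c1 / (1 - t) ^ 2) * Ttwo b2 σ2 θ2) < 0 := by

  obtain ⟨hb1l, hb1r⟩ := hb1
  obtain ⟨hb2l, hb2r⟩ := hb2
  obtain ⟨htl, htr⟩ := ht
  obtain ⟨hσ1l, hσ1r⟩ := hσ1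
  have h1t : (1 : ℝ) - t ≠ 0 := by linarith
  have hb1pos : (0:ℝ) < 2 * (1 - b1) := by linarith
  have hb1ne : (2 * (1 - b1) : ℝ) ≠ 0 := ne_of_gt hb1pos
  have hK1pos : (0:ℝ) < (1 - σ1) * θ1 := mul_pos (by linarith) hθ1
  have hK1 : ((1 - σ1) * θ1 : ℝ) ≠ 0 := ne_of_gt hK1pos
  have hΔne : Dr m b1 b2 t σ1 σ2 θ1 θ2 ≠ 0 := ne_of_gt hΔ
  set T2 := Ttwo b2 σ2 θ2 with hT2def
  set Δ := Dr m b1 b2 t σ1 σ2 θ1 θ2 with hΔdef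
  set Q := q1p a c1 c2 m b1 b2 t σ1 σ2 θ1 θ2 with hQdef
  -- derivative of the inner cost term
  have hcost : HasDerivAt (fun τ : ℝ => c1 / (1 - τ)) (c1 / (1 - t) ^ 2) t := by
    have h : HasDerivAt (fun τ : ℝ => c1 / (1 - τ))
        ((0 * (1 - t) - c1 * (0 - 1)) / (1 - t) ^ 2) t :=
      (hasDerivAt_const t c1).div ((hasDerivAt_const t 1).sub (hasDerivAt_id t)) h1t
    convert h using 1; ring
  -- derivative of the numerator of q1p
  have hN : HasDerivAt (fun τ : ℝ => (a - c1 / (1 - τ)) * T2 / (2 * (1 - b1))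
      - m * (a - c2) / (2 * (1 - b2)))
      (-(c1 / (1 - t) ^ 2) * T2 / (2 * (1 - b1))) t := by
    have h : HasDerivAt (fun τ : ℝ => (a - c1 / (1 - τ)) * T2 / (2 * (1 - b1))
        - m * (a - c2) / (2 * (1 - b2)))
        ((0 - c1 / (1 - t) ^ 2) * T2 / (2 * (1 - b1)) - 0) t := by
      exact ((((hasDerivAt_const t a).sub hcost).mul_const T2).div_const
        (2 * (1 - b1))).sub (hasDerivAt_const t (m * (a - c2) / (2 * (1 - b2))))
    convert h using 1; ring
  -- derivative of Δ as a function of τ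
  have hDr : HasDerivAt (fun τ : ℝ => Dr m b1 b2 τ σ1 σ2 θ1 θ2)
      (T2 / (2 * (1 - b1) * (1 - σ1) * θ1)) t := by
    have h : HasDerivAt (fun τ : ℝ =>
        (1 - (1 - τ) / (2 * (1 - b1) * (1 - σ1) * θ1)) * T2 - Mnet m b1 b2)
        (((0 - (0 - 1) / (2 * (1 - b1) * (1 - σ1) * θ1)) * T2) - 0) t := by
      exact (((hasDerivAt_const t 1).sub
        (((hasDerivAt_const t 1).sub (hasDerivAt_id t)).div_const
          (2 * (1 - b1) * (1 - σ1) * θ1))).mul_const T2).sub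
        (hasDerivAt_const t (Mnet m b1 b2))
    have he : (fun τ : ℝ => Dr m b1 b2 τ σ1 σ2 θ1 θ2) = (fun τ : ℝ =>
        (1 - (1 - τ) / (2 * (1 - b1) * (1 - σ1) * θ1)) * T2 - Mnet m b1 b2) := by
      funext τ; simp [Dr, Tone, hT2def]
    rw [he]
    convert h using 1; ring
  have hKpos : (0:ℝ) < 2 * (1 - b1) * (1 - σ1) * θ1 := by
    have := mul_pos (mul_pos hb1pos (by linarith : (0:ℝ) < 1 - σ1)) hθ1
    linarith [this]
  have hKne : (2 * (1 - b1) * (1 - σ1) * θ1 : ℝ) ≠ 0 := ne_of_gt hKpos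
  -- derivative of q1p
  have hq1d : HasDerivAt (fun τ => q1p a c1 c2 m b1 b2 τ σ1 σ2 θ1 θ2)
      (-(1 / Δ) * (1 / (2 * (1 - b1))) * (Q / ((1 - σ1) * θ1) + c1 / (1 - t) ^ 2) * T2) t := by
    have h : HasDerivAt (fun τ => q1p a c1 c2 m b1 b2 τ σ1 σ2 θ1 θ2)
        (((-(c1 / (1 - t) ^ 2) * T2 / (2 * (1 - b1))) * Δ -
          ((a - c1 / (1 - t)) * T2 / (2 * (1 - b1)) - m * (a - c2) / (2 * (1 - b2))) *
            (T2 / (2 * (1 - b1) * (1 - σ1) * θ1))) / Δ ^ 2) t := by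
      have he : (fun τ => q1p a c1 c2 m b1 b2 τ σ1 σ2 θ1 θ2) = (fun τ : ℝ =>
          ((a - c1 / (1 - τ)) * T2 / (2 * (1 - b1)) - m * (a - c2) / (2 * (1 - b2))) /
            Dr m b1 b2 τ σ1 σ2 θ1 θ2) := by
        funext τ; simp [q1p, hT2def]
      rw [he]
      exact hN.div hDr hΔne
    convert h using 1
    rw [hQdef, q1p, ← hT2def, ← hΔdef]
    field_simp
    ring
  refine ⟨hq1d, ?_, ?_, ?_⟩
  · have hS : (0:ℝ) < Q / ((1 - σ1) * θ1) + c1 / (1 - t) ^ 2 :=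
      add_pos (div_pos hq1 hK1pos) (div_pos hc1 (by positivity))
    have hpos : (0:ℝ) < (1 / Δ) * (1 / (2 * (1 - b1))) *
        (Q / ((1 - σ1) * θ1) + c1 / (1 - t) ^ 2) * T2 :=
      mul_pos (mul_pos (mul_pos (one_div_pos.mpr hΔ) (one_div_pos.mpr hb1pos)) hS) hT2
    nlinarith [hpos]
  · have h : HasDerivAt (fun τ => r1p a c1 c2 m b1 b2 τ σ1 σ2 θ1 θ2)
        (((0 - 1) * Q + (1 - t) *
          (-(1 / Δ) * (1 / (2 * (1 - b1))) * (Q / ((1 - σ1) * θ1) + c1 / (1 - t) ^ 2) * T2)) /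
            ((1 - σ1) * θ1)) t := by
      have he : (fun τ => r1p a c1 c2 m b1 b2 τ σ1 σ2 θ1 θ2) = (fun τ : ℝ =>
          (1 - τ) * q1p a c1 c2 m b1 b2 τ σ1 σ2 θ1 θ2 / ((1 - σ1) * θ1)) := by
        funext τ; simp [r1p]
      rw [he]
      exact ((((hasDerivAt_const t 1).sub (hasDerivAt_id t)).mul hq1d).div_const
        ((1 - σ1) * θ1))
    convert h using 1
    ring
  · have hS : (0:ℝ) < Q / ((1 - σ1) * θ1) + c1 / (1 - t) ^ 2 :=
      add_pos (div_pos hq1 hK1pos) (div_pos hc1 (by positivity))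
    have hpos : (0:ℝ) < (1 / Δ) * ((1 - t) / (2 * (1 - b1))) *
        (Q / ((1 - σ1) * θ1) + c1 / (1 - t) ^ 2) * T2 :=
      mul_pos (mul_pos (mul_pos (one_div_pos.mpr hΔ)
        (div_pos (by linarith) hb1pos)) hS) hT2
    have hinner : (0:ℝ) < Q + (1 / Δ) * ((1 - t) / (2 * (1 - b1))) *
        (Q / ((1 - σ1) * θ1) + c1 / (1 - t) ^ 2) * T2 := by linarith
    nlinarith [mul_pos (one_div_pos.mpr hK1pos) hinner]
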